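/- The limit as t → ∞ of s1(t) = (t e^t + 1 - e^t + sqrt(1 - 2e^t + e^{2t} - t^2 e^t)) / (t(e^t - 1)) equals 1. -/

import Mathlib

noncomputable def s1 (t : ℝ) : ℝ :=
  (t * Real.exp t + 1 - Real.exp t +
      Real.sqrt (1 - 2 * Real.exp t + Real.exp (2 * t) - t ^ 2 * Real.exp t)) /
    (t * (Real.exp t - 1))

theorem s1_tendsto_one : Filter.Tendsto s1 Filter.atTop (nhds 1) := by
  have hinv : Filter.Tendsto (fun t : ℝ => t⁻¹) Filter.atTop (nhds 0) :=
    tendsto_inv_atTop_zero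
  -- sqrt term tends to 0
  have hsq : Filter.Tendsto (fun t : ℝ =>
      Real.sqrt (1 - 2 * Real.exp t + Real.exp (2 * t) - t ^ 2 * Real.exp t) /
        (t * Real.exp t)) Filter.atTop (nhds 0) := by
    apply squeeze_zero_norm' _ hinv
    filter_upwards [Filter.eventually_ge_atTop (1 : ℝ)] with t ht
    have ht0 : (0 : ℝ) < t := by linarith
    have hE := Real.exp_pos t
    have hden : 0 < t * Real.exp t := mul_pos ht0 hE
    have hb : Real.sqrt (1 - 2 * Real.exp t + Real.exp (2 * t) - t ^ 2 * Real.exp t)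
        ≤ Real.exp t := by
      have : (1 - 2 * Real.exp t + Real.exp (2 * t) - t ^ 2 * Real.exp t) ≤ (Real.exp t) ^ 2 := by
        have h2 : Real.exp (2 * t) = (Real.exp t) ^ 2 := by
          rw [two_mul, Real.exp_add]; ring
        nlinarith [Real.add_one_le_exp t, sq_nonneg t]
      calc Real.sqrt _ ≤ Real.sqrt ((Real.exp t) ^ 2) := Real.sqrt_le_sqrt this
        _ = Real.exp t := Real.sqrt_sq hE.le
    rw [Real.norm_eq_abs, abs_div, abs_of_nonneg (Real.sqrt_nonneg _),
      abs_of_pos hden]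
    rw [div_le_iff₀ hden]
    calc Real.sqrt _ ≤ Real.exp t := hb
      _ = t⁻¹ * (t * Real.exp t) := by field_simp
  -- linear term tends to 0
  have hlin : Filter.Tendsto (fun t : ℝ => (1 - Real.exp t) / (t * Real.exp t))
      Filter.atTop (nhds 0) := by
    apply squeeze_zero_norm' _ hinv
    filter_upwards [Filter.eventually_ge_atTop (1 : ℝ)] with t ht
    have ht0 : (0 : ℝ) < t := by linarith
    have hE := Real.exp_pos t
    have hE1 : 1 < Real.exp t := by
      have := Real.add_one_le_exp t; linarith
    have hden : 0 < t * Real.exp t := mul_pos ht0 hE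
    rw [Real.norm_eq_abs, abs_div, abs_of_pos hden, abs_of_nonpos (by linarith)]
    rw [div_le_iff₀ hden]
    have : t⁻¹ * (t * Real.exp t) = Real.exp t := by field_simp
    rw [this]; linarith
  -- numerator / (t * exp t) tends to 1
  have h1 : Filter.Tendsto (fun t : ℝ => (t * Real.exp t + 1 - Real.exp t +
      Real.sqrt (1 - 2 * Real.exp t + Real.exp (2 * t) - t ^ 2 * Real.exp t)) /
        (t * Real.exp t)) Filter.atTop (nhds 1) := by
    have h := (hlin.add hsq).const_add (1 : ℝ)
    simp only [add_zero] at h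
    apply h.congr'
    filter_upwards [Filter.eventually_ge_atTop (1 : ℝ)] with t ht
    have ht0 : (0 : ℝ) < t := by linarith
    have hE := Real.exp_pos t
    field_simp
    ring
  -- denominator factor tends to 1
  have hg : Filter.Tendsto (fun t : ℝ => 1 - Real.exp (-t)) Filter.atTop (nhds 1) := by
    have := Real.tendsto_exp_neg_atTop_nhds_zero
    have h := this.const_sub (1 : ℝ)
    simpa using h
  have := h1.div hg one_ne_zero
  rw [div_one] at this
  apply this.congr'
  filter_upwards [Filter.eventually_ge_atTop (1 : ℝ)] with t ht
  have ht0 : (0 : ℝ) < t := by linarith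
  have hE := Real.exp_pos t
  have hE1 : 1 < Real.exp t := by
    have := Real.add_one_le_exp t; linarith
  unfold s1
  simp only [Pi.div_apply, Real.exp_neg]
  rw [div_div]
  congr 1
  field_simp
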